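/- (Lemma 6) Let o_0, …, o_n be a trip schedule whose points each lie in some subgraph of the partition, let the rider's source l^s and destination l^d lie in some subgraphs, and let 0 ≤ i < j < n. Suppose l^s is inserted between o_i and o_{i+1} and l^d is to be inserted between o_j and o_{j+1}. If Δd(o_i, l^s, o_{i+1}) + dis↓(o_j, l^d) + dis↓(l^d, o_{j+1}) − dist(o_j, o_{j+1}) > sd[j+1], then the total actual incremental distance Δd(o_i, l^s, o_{i+1}) + Δd(o_j, l^d, o_{j+1}) also exceeds sd[j+1]; consequently some position x with j+1 ≤ x ≤ n has its surplus sur(x) exceeded, so l^d cannot be inserted at the j-th point. -/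

import Mathlib

open scoped Classical

/-- Lower bound distance `dis(G_i, G_j)` between two subgraphs: the minimum
shortest-path distance over all bridge-vertex pairs (0 if `i = j`). -/
noncomputable def disG {X ι : Type*} [MetricSpace X] (B : ι → Finset X) (i j : ι) : ℝ :=
  if i = j then 0 else sInf {d : ℝ | ∃ b ∈ B i, ∃ b' ∈ B j, d = dist b b'}

/-- Lower bound distance `dis↓(u)` from a vertex `u` of subgraph `i` to its
nearest bridge vertex of that subgraph. -/
noncomputable def disDown {X ι : Type*} [MetricSpace X] (B : ι → Finset X) (i : ι) (u : X) : ℝ :=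
  sInf {d : ℝ | ∃ b ∈ B i, d = dist u b}

/-- Lower bound distance `dis↓(u, G_j)` between a vertex `u ∈ V i` and the subgraph `G_j`. -/
noncomputable def disVG {X ι : Type*} [MetricSpace X] (B : ι → Finset X) (i j : ι) (u : X) : ℝ :=
  if i = j then 0
  else disG B i j + (if u ∈ B i then 0 else disDown B i u)

/-- Lower bound distance `dis↓(u, v)` between vertices `u ∈ V i` and `v ∈ V j`. -/
noncomputable def disVV {X ι : Type*} [MetricSpace X] (B : ι → Finset X) (i j : ι) (u v : X) : ℝ :=
  if i = j then 0
  else disG B i j + (if u ∈ B i then 0 else disDown B i u)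
    + (if v ∈ B j then 0 else disDown B j v)

/-- Slack distance `sd[k] = min_{k ≤ x ≤ n} sur(x)` of a trip schedule with
surplus values `sur`. -/
noncomputable def slack (sur : ℕ → ℝ) (n k : ℕ) : ℝ := sInf (sur '' Set.Icc k n)

/-- The incremental distance `Δd(a,b,c)` of inserting `b` between `a` and `c`. -/
noncomputable def incDist {X : Type*} [MetricSpace X] (a b c : X) : ℝ :=
  dist a b + dist b c - dist a c

/-! Since shortest paths between subgraphs pass through bridge vertices, every lower bound
`dis↓(u, v)` is at most `dist u v`; replacing the two lower bounds in the hypothesis by true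
distances therefore only increases the left side, and a value below the infimum `sd[j+1]` is
exceeded by some surplus `sur x` with `j + 1 ≤ x ≤ n`. -/

section BridgeBounds

variable {X ι : Type*} [MetricSpace X] (B : ι → Finset X)

lemma disG_le_dist {i j : ι} {b b' : X} (hb : b ∈ B i) (hb' : b' ∈ B j) :
    disG B i j ≤ dist b b' := by
  unfold disG
  split_ifs
  · exact dist_nonneg
  · exact csInf_le ⟨0, fun _ ⟨_, _, _, _, hd⟩ => hd ▸ dist_nonneg⟩ ⟨b, hb, b', hb', rfl⟩

lemma disDown_le_dist {i : ι} {b : X} (hb : b ∈ B i) (u : X) : disDown B i u ≤ dist u b :=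
  csInf_le ⟨0, fun _ ⟨_, _, hd⟩ => hd ▸ dist_nonneg⟩ ⟨b, hb, rfl⟩

lemma ite_disDown_le_dist {i : ι} {b : X} (hb : b ∈ B i) (u : X) :
    (if u ∈ B i then 0 else disDown B i u) ≤ dist u b := by
  split_ifs
  · exact dist_nonneg
  · exact disDown_le_dist B hb u

lemma disVV_le_dist (V : ι → Set X)
    (hpass : ∀ i j : ι, i ≠ j → ∀ u ∈ V i, ∀ v ∈ V j,
      ∃ b ∈ B i, ∃ b' ∈ B j, dist u v = dist u b + dist b b' + dist b' v)
    {i j : ι} {u v : X} (hu : u ∈ V i) (hv : v ∈ V j) :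
    disVV B i j u v ≤ dist u v := by
  unfold disVV
  by_cases hij : i = j
  · rw [if_pos hij]
    exact dist_nonneg
  · rw [if_neg hij]
    obtain ⟨b, hb, b', hb', hsplit⟩ := hpass i j hij u hu v hv
    have hbridge := disG_le_dist B hb hb'
    have hu' := ite_disDown_le_dist B hb u
    have hv' := ite_disDown_le_dist B hb' v
    rw [dist_comm b' v] at hsplit
    linarith

end BridgeBounds

lemma exists_lt_of_slack_lt {sur : ℕ → ℝ} {n k : ℕ} {c : ℝ} (hk : k ≤ n)
    (h : slack sur n k < c) : ∃ x, k ≤ x ∧ x ≤ n ∧ sur x < c := by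
  obtain ⟨_, ⟨x, hx, rfl⟩, hlt⟩ :=
    exists_lt_of_csInf_lt (s := sur '' Set.Icc k n) ⟨sur k, k, ⟨le_rfl, hk⟩, rfl⟩ h
  exact ⟨x, hx.1, hx.2, hlt⟩

theorem prune_destination_insertion_general {X ι : Type*} [MetricSpace X]
    (V : ι → Set X) (B : ι → Finset X)
    (hpass : ∀ i j : ι, i ≠ j → ∀ u ∈ V i, ∀ v ∈ V j,
      ∃ b ∈ B i, ∃ b' ∈ B j, dist u v = dist u b + dist b b' + dist b' v)
    (o : ℕ → X) (n : ℕ) (idx : ℕ → ι) (ho : ∀ k, k ≤ n → o k ∈ V (idx k))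
    (sur : ℕ → ℝ)
    {id' : ι} {ls ld : X} (hld : ld ∈ V id')
    {i j : ℕ} (hj : j < n)
    (h : incDist (o i) ls (o (i + 1))
          + disVV B (idx j) id' (o j) ld + disVV B id' (idx (j + 1)) ld (o (j + 1))
          - dist (o j) (o (j + 1)) > slack sur n (j + 1)) :
    incDist (o i) ls (o (i + 1)) + incDist (o j) ld (o (j + 1))
        > slack sur n (j + 1) ∧
      ∃ x, j + 1 ≤ x ∧ x ≤ n ∧
        sur x < incDist (o i) ls (o (i + 1)) + incDist (o j) ld (o (j + 1)) := by
  have hto : disVV B (idx j) id' (o j) ld ≤ dist (o j) ld :=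
    disVV_le_dist B V hpass (ho j hj.le) hld
  have hfrom : disVV B id' (idx (j + 1)) ld (o (j + 1)) ≤ dist ld (o (j + 1)) :=
    disVV_le_dist B V hpass hld (ho (j + 1) hj)
  have hexceeds : incDist (o i) ls (o (i + 1)) + incDist (o j) ld (o (j + 1))
      > slack sur n (j + 1) := by
    unfold incDist at h ⊢
    linarith
  exact ⟨hexceeds, exists_lt_of_slack_lt hj hexceeds⟩

/-- Lemma 6: with `l^s` inserted between `o_i` and `o_{i+1}`
and `l^d` to be inserted between `o_j` and `o_{j+1}` (`i < j < n`), if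
`Δd(o_i,l^s,o_{i+1})` plus the lower-bound incremental drop-off distance
exceeds the slack `sd[j+1]`, then the total actual incremental distance
`Δd(o_i,l^s,o_{i+1}) + Δd(o_j,l^d,o_{j+1})` also exceeds `sd[j+1]`, and some
position `x` with `j+1 ≤ x ≤ n` has its surplus exceeded; hence `l^d` cannot
be inserted at the `j`-th point. -/
theorem prune_destination_insertion {X ι : Type*} [MetricSpace X] [Nontrivial ι]
    (V : ι → Set X) (B : ι → Finset X)
    (hcover : ∀ x : X, ∃ i, x ∈ V i)
    (hdisj : ∀ i j : ι, i ≠ j → Disjoint (V i) (V j))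
    (hBne : ∀ i, (B i).Nonempty)
    (hBV : ∀ i, (B i : Set X) ⊆ V i)
    (hpass : ∀ i j : ι, i ≠ j → ∀ u ∈ V i, ∀ v ∈ V j,
      ∃ b ∈ B i, ∃ b' ∈ B j, dist u v = dist u b + dist b b' + dist b' v)
    (o : ℕ → X) (n : ℕ) (idx : ℕ → ι) (ho : ∀ k, k ≤ n → o k ∈ V (idx k))
    (sur : ℕ → ℝ)
    {is id' : ι} {ls ld : X} (hls : ls ∈ V is) (hld : ld ∈ V id')
    {i j : ℕ} (hij : i < j) (hj : j < n)
    (h : incDist (o i) ls (o (i + 1))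
          + disVV B (idx j) id' (o j) ld + disVV B id' (idx (j + 1)) ld (o (j + 1))
          - dist (o j) (o (j + 1)) > slack sur n (j + 1)) :
    incDist (o i) ls (o (i + 1)) + incDist (o j) ld (o (j + 1))
        > slack sur n (j + 1) ∧
      ∃ x, j + 1 ≤ x ∧ x ≤ n ∧
        sur x < incDist (o i) ls (o (i + 1)) + incDist (o j) ld (o (j + 1)) :=
  prune_destination_insertion_general V B hpass o n idx ho sur hld hj h
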